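/- arXiv:1911.00929 — 2 statements merged into one kernel-verified Lean document; each statement's English description precedes it below -/
import Mathlib

section
/- Let p be a prime and let S be a nontrivial finite set of words over {0, …, p−1} that contains the empty word and is closed under prefixes. Then the p-adic balls {B_ℓ : ℓ ∈ L(S)} corresponding to the leaves of S form a partition of ℤ_p if and only if every non-leaf node of S splits completely in S, i.e., for every s ∈ S \ L(S) and every c ∈ Fin p one has s ++ [c] ∈ S. -/
/-- `ν(w) = Σ_{k<n} a_k p^k` for a word `w = [a₀, …, a_{n-1}]` over `{0, …, p-1}`. -/
def wordVal (p : ℕ) (w : List (Fin p)) : ℕ :=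
  w.foldr (fun a acc => a.val + p * acc) 0

/-- The `p`-adic ball `B_w = {x ∈ ℤ_p : ‖x − ν(w)‖ ≤ p^{−n}}` associated to a word `w`
of length `n`. -/
def padicBall (p : ℕ) [Fact p.Prime] (w : List (Fin p)) : Set ℤ_[p] :=
  {x : ℤ_[p] | ‖x - (wordVal p w : ℤ_[p])‖ ≤ (p : ℝ) ^ (-(w.length : ℤ))}

/-- The leaves of a set `S` of words: elements of `S` none of whose children lies
in `S`. -/
def leaves (p : ℕ) (S : Set (List (Fin p))) : Set (List (Fin p)) :=
  {s ∈ S | ∀ c : Fin p, s ++ [c] ∉ S}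

/-- The balls indexed by the words of `W` form a partition of `ℤ_p`: they are nonempty,
pairwise disjoint and cover `ℤ_p`. -/
def IsBallPartition (p : ℕ) [Fact p.Prime] (W : Set (List (Fin p))) : Prop :=
  (∀ w ∈ W, (padicBall p w).Nonempty) ∧
  (∀ v ∈ W, ∀ w ∈ W, v ≠ w → Disjoint (padicBall p v) (padicBall p w)) ∧
  (⋃ w ∈ W, padicBall p w) = Set.univ

/-!
A `p`-adic integer `x` lies in `B_w` exactly when `w` is the word of the first `|w|` base-`p`
digits of `x`. Hence two balls meet only if one of their words is a prefix of the other, and a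
leaf of a prefix-closed `S` is a proper prefix of no word of `S`, which gives disjointness. If
every inner node splits completely, the longest prefix of the expansion of `x` lying in the
finite set `S` is a leaf, so the leaf balls cover `ℤ_p`; conversely, the leaf ball containing
`ν(s ++ [c])` forces `s ++ [c] ∈ S` for every inner node `s`.
-/

section Words

variable {p : ℕ} {S : Set (List (Fin p))}

theorem eq_of_mem_leaves_of_isPrefix
    (hpref : ∀ v ∈ S, ∀ w : List (Fin p), w <+: v → w ∈ S)
    {ℓ w : List (Fin p)} (hℓ : ℓ ∈ leaves p S) (hw : w ∈ S) (h : ℓ <+: w) : ℓ = w := by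
  obtain ⟨t, rfl⟩ := h
  cases t with
  | nil => simp
  | cons c t => exact absurd (hpref _ hw _ ⟨t, by simp⟩) (hℓ.2 c)

theorem exists_mem_leaves_of_isPrefix_chain (hfin : S.Finite) (hroot : [] ∈ S)
    (hsplit : ∀ s ∈ S \ leaves p S, ∀ c : Fin p, s ++ [c] ∈ S)
    (f : ℕ → List (Fin p)) (hlen : ∀ n, (f n).length = n) (hchain : ∀ n, f n <+: f (n + 1)) :
    ∃ n, f n ∈ leaves p S := by
  classical
  obtain ⟨N, hN⟩ := (hfin.image List.length).bddAbove
  have hf0 : f 0 ∈ S := by rwa [List.eq_nil_of_length_eq_zero (hlen 0)]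
  set n := Nat.findGreatest (fun n => f n ∈ S) N
  have hn : f n ∈ S := Nat.findGreatest_spec (P := fun n => f n ∈ S) (Nat.zero_le N) hf0
  refine ⟨n, hn, fun c hc => ?_⟩
  have hnext : f (n + 1) ∈ S := by
    obtain ⟨t, ht⟩ := hchain n
    obtain ⟨d, rfl⟩ : ∃ d, t = [d] := List.length_eq_one_iff.mp <| by
      have := congrArg List.length ht
      simp only [List.length_append, hlen] at this
      omega
    exact ht ▸ hsplit _ ⟨hn, fun h => h.2 c hc⟩ d
  have hle : n + 1 ≤ N := hlen (n + 1) ▸ hN ⟨_, hnext, rfl⟩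
  exact Nat.findGreatest_is_greatest (Nat.lt_succ_self n) hle hnext

end Words

section Digits

variable {p : ℕ}

theorem wordVal_cons (a : Fin p) (w : List (Fin p)) :
    wordVal p (a :: w) = a + p * wordVal p w := rfl

theorem wordVal_lt (w : List (Fin p)) : wordVal p w < p ^ w.length := by
  induction w with
  | nil => simp [wordVal]
  | cons a t ih =>
    rw [wordVal_cons, List.length_cons, pow_succ']
    nlinarith [a.isLt]

variable [hp : Fact p.Prime]

variable (p) in
/-- The first `n` base-`p` digits of `m`, least significant first. -/
def toWord : ℕ → ℕ → List (Fin p)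
  | 0, _ => []
  | n + 1, m => ⟨m % p, Nat.mod_lt _ hp.out.pos⟩ :: toWord n (m / p)

@[simp]
theorem length_toWord (n m : ℕ) : (toWord p n m).length = n := by
  induction n generalizing m with
  | zero => rfl
  | succ n ih => simp [toWord, ih]

theorem wordVal_toWord (n m : ℕ) : wordVal p (toWord p n m) = m % p ^ n := by
  induction n generalizing m with
  | zero => simp [toWord, wordVal, Nat.mod_one]
  | succ n ih => rw [toWord, wordVal_cons, ih, pow_succ', Nat.mod_mul]

theorem toWord_wordVal (w : List (Fin p)) : toWord p w.length (wordVal p w) = w := by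
  induction w with
  | nil => rfl
  | cons a t ih =>
    have hdiv : (a + p * wordVal p t) / p = wordVal p t := by
      rw [Nat.add_mul_div_left _ _ hp.out.pos, Nat.div_eq_of_lt a.isLt, zero_add]
    rw [List.length_cons, toWord, wordVal_cons, hdiv, ih]
    congr
    simp [Nat.mod_eq_of_lt a.isLt]

theorem toWord_mod_pow (n m : ℕ) : toWord p n (m % p ^ n) = toWord p n m := by
  induction n generalizing m with
  | zero => rfl
  | succ n ih =>
    have hdiv : m % p ^ (n + 1) / p = m / p % p ^ n := by
      rw [pow_succ', Nat.mod_mul_right_div_self]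
    rw [toWord, toWord, hdiv, ih]
    congr 1
    exact Fin.ext (Nat.mod_mod_of_dvd m (dvd_pow_self p n.succ_ne_zero))

theorem toWord_isPrefix_toWord {k n : ℕ} (h : k ≤ n) (m : ℕ) : toWord p k m <+: toWord p n m := by
  induction k generalizing n m with
  | zero => exact List.nil_prefix
  | succ k ih =>
    obtain ⟨n, rfl⟩ := Nat.exists_eq_add_of_le' (Nat.zero_lt_of_lt h)
    exact List.cons_prefix_cons.mpr ⟨rfl, ih (by omega) _⟩

end Digits

namespace PadicInt

variable {p : ℕ} [Fact p.Prime]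

noncomputable def digitWord (x : ℤ_[p]) (n : ℕ) : List (Fin p) := toWord p n (x.appr n)

@[simp]
theorem length_digitWord (x : ℤ_[p]) (n : ℕ) : (x.digitWord n).length = n :=
  length_toWord n _

theorem digitWord_isPrefix_digitWord (x : ℤ_[p]) {m n : ℕ} (h : m ≤ n) :
    x.digitWord m <+: x.digitWord n := by
  have happr : x.appr n % p ^ m = x.appr m := by
    rw [← Nat.mod_eq_of_lt (x.appr_lt m)]
    exact ((Nat.modEq_iff_dvd' (x.appr_mono h)).mpr (x.dvd_appr_sub_appr m n h)).symm
  rw [digitWord, ← happr, toWord_mod_pow]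
  exact toWord_isPrefix_toWord h _

theorem mem_padicBall_iff_appr (w : List (Fin p)) (x : ℤ_[p]) :
    x ∈ padicBall p w ↔ x.appr w.length = wordVal p w := by
  have hspan : x ∈ padicBall p w ↔ x - wordVal p w ∈ Ideal.span {(p : ℤ_[p]) ^ w.length} :=
    norm_le_pow_iff_mem_span_pow _ _
  refine hspan.trans ⟨fun h => ?_, fun h => h ▸ x.appr_spec _⟩
  have hcast := zmod_congr_of_sub_mem_span _ x _ _ (x.appr_spec _) h
  rwa [ZMod.natCast_eq_natCast_iff', Nat.mod_eq_of_lt (x.appr_lt _),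
    Nat.mod_eq_of_lt (wordVal_lt w)] at hcast

theorem mem_padicBall_iff_eq_digitWord (w : List (Fin p)) (x : ℤ_[p]) :
    x ∈ padicBall p w ↔ w = x.digitWord w.length := by
  rw [mem_padicBall_iff_appr, digitWord]
  constructor
  · intro h
    rw [h, toWord_wordVal]
  · intro h
    rw [h, wordVal_toWord, Nat.mod_eq_of_lt (x.appr_lt _), length_toWord]

theorem mem_padicBall_digitWord (x : ℤ_[p]) (n : ℕ) : x ∈ padicBall p (x.digitWord n) := by
  rw [mem_padicBall_iff_eq_digitWord, length_digitWord]

theorem isPrefix_or_isPrefix_of_mem_padicBall {v w : List (Fin p)} {x : ℤ_[p]}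
    (hv : x ∈ padicBall p v) (hw : x ∈ padicBall p w) : v <+: w ∨ w <+: v := by
  rw [mem_padicBall_iff_eq_digitWord] at hv hw
  rcases le_total v.length w.length with h | h
  · left
    rw [hv, hw]
    exact x.digitWord_isPrefix_digitWord h
  · right
    rw [hv, hw]
    exact x.digitWord_isPrefix_digitWord h

end PadicInt

section Leaves

open PadicInt

variable {p : ℕ} [Fact p.Prime] {S : Set (List (Fin p))}

theorem wordVal_mem_padicBall (w : List (Fin p)) : (wordVal p w : ℤ_[p]) ∈ padicBall p w := by
  show ‖_ - _‖ ≤ _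
  rw [sub_self, norm_zero]
  positivity

theorem disjoint_padicBall_of_mem_leaves
    (hpref : ∀ v ∈ S, ∀ w : List (Fin p), w <+: v → w ∈ S)
    {v w : List (Fin p)} (hv : v ∈ leaves p S) (hw : w ∈ leaves p S) (hne : v ≠ w) :
    Disjoint (padicBall p v) (padicBall p w) := by
  refine Set.disjoint_left.mpr fun x hxv hxw => hne ?_
  rcases isPrefix_or_isPrefix_of_mem_padicBall hxv hxw with h | h
  · exact eq_of_mem_leaves_of_isPrefix hpref hv hw.1 h
  · exact (eq_of_mem_leaves_of_isPrefix hpref hw hv.1 h).symm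

theorem iUnion_padicBall_leaves_eq_univ (hfin : S.Finite) (hroot : [] ∈ S)
    (hsplit : ∀ s ∈ S \ leaves p S, ∀ c : Fin p, s ++ [c] ∈ S) :
    ⋃ w ∈ leaves p S, padicBall p w = Set.univ := by
  refine Set.eq_univ_of_forall fun x => Set.mem_iUnion₂.mpr ?_
  obtain ⟨n, hn⟩ := exists_mem_leaves_of_isPrefix_chain hfin hroot hsplit x.digitWord
    x.length_digitWord fun n => x.digitWord_isPrefix_digitWord n.le_succ
  exact ⟨_, hn, mem_padicBall_digitWord x n⟩

theorem append_singleton_mem_of_iUnion_padicBall_leaves_eq_univ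
    (hpref : ∀ v ∈ S, ∀ w : List (Fin p), w <+: v → w ∈ S)
    (hcover : ⋃ w ∈ leaves p S, padicBall p w = Set.univ)
    {s : List (Fin p)} (hs : s ∈ S \ leaves p S) (c : Fin p) : s ++ [c] ∈ S := by
  obtain ⟨ℓ, hℓ, hxℓ⟩ :=
    Set.mem_iUnion₂.mp (hcover ▸ Set.mem_univ (wordVal p (s ++ [c]) : ℤ_[p]))
  rcases isPrefix_or_isPrefix_of_mem_padicBall hxℓ (wordVal_mem_padicBall _) with h | h
  · rcases List.prefix_concat_iff.mp h with rfl | h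
    · exact hℓ.1
    · exact absurd (eq_of_mem_leaves_of_isPrefix hpref hℓ hs.1 h ▸ hℓ) hs.2
  · exact hpref ℓ hℓ.1 _ h

end Leaves

theorem leaves_partition_iff_split_completely_general (p : ℕ) [Fact p.Prime]
    (S : Set (List (Fin p))) (hfin : S.Finite) (hroot : ([] : List (Fin p)) ∈ S)
    (hpref : ∀ v ∈ S, ∀ w : List (Fin p), w <+: v → w ∈ S) :
    IsBallPartition p (leaves p S) ↔
      ∀ s ∈ S \ leaves p S, ∀ c : Fin p, s ++ [c] ∈ S := by
  constructor
  · rintro ⟨-, -, hcover⟩ s hs c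
    exact append_singleton_mem_of_iUnion_padicBall_leaves_eq_univ hpref hcover hs c
  · intro hsplit
    exact ⟨fun w _ => ⟨_, wordVal_mem_padicBall w⟩,
      fun v hv w hw => disjoint_padicBall_of_mem_leaves hpref hv hw,
      iUnion_padicBall_leaves_eq_univ hfin hroot hsplit⟩

/-- For a nontrivial finite subtree `S` of the `p`-ary tree rooted at the empty word, the
balls of the leaves of `S` partition `ℤ_p` if and only if every non-leaf node of `S`
splits completely in `S`. -/
theorem leaves_partition_iff_split_completely (p : ℕ) [Fact p.Prime]
    (S : Set (List (Fin p))) (hfin : S.Finite) (hroot : ([] : List (Fin p)) ∈ S)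
    (hpref : ∀ v ∈ S, ∀ w : List (Fin p), w <+: v → w ∈ S)
    (hnontriv : ∃ w ∈ S, w ≠ []) :
    IsBallPartition p (leaves p S) ↔
      ∀ s ∈ S \ leaves p S, ∀ c : Fin p, s ++ [c] ∈ S :=
  leaves_partition_iff_split_completely_general p S hfin hroot hpref
end

section
/- Let p be a prime and let S be a nontrivial finite set of words over {0, …, p−1} containing the empty word, closed under prefixes, and such that every non-leaf node of S splits completely (for every s ∈ S \ L(S) and every c ∈ Fin p, s ++ [c] ∈ S). Then every word w over {0, …, p−1} admits a unique factorization w = ℓ₁ ++ ℓ₂ ++ ⋯ ++ ℓₙ ++ s with n ≥ 0, each ℓᵢ ∈ L(S), and s ∈ S \ L(S). -/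
/-!
Existence: extend a factorization of `w` to one of `w ++ [c]`. The tail `s` is not a leaf, so
`s ++ [c] ∈ S`; it either stays the tail or, being a leaf, becomes the last factor with the empty
tail, which is a non-leaf because `S` is nontrivial and prefix-closed. Uniqueness: in a prefix-closed set a leaf has no proper extension in `S`, and two prefixes
of one word are comparable, so the first factor of `w` is forced.
-/

variable {p : ℕ} {S : Set (List (Fin p))}

def IsLeafFactorization (S : Set (List (Fin p))) (w : List (Fin p))
    (L : List (List (Fin p))) (s : List (Fin p)) : Prop :=
  (∀ x ∈ L, x ∈ leaves p S) ∧ s ∈ S \ leaves p S ∧ w = L.flatten ++ s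

lemma eq_of_mem_leaves_of_prefix (hpref : ∀ v ∈ S, ∀ w : List (Fin p), w <+: v → w ∈ S)
    {a b : List (Fin p)} (ha : a ∈ leaves p S) (hb : b ∈ S) (hab : a <+: b) : a = b := by
  obtain ⟨_ | ⟨c, t⟩, rfl⟩ := hab
  · exact (List.append_nil a).symm
  · exact absurd (hpref _ hb _ ⟨t, by simp⟩) (ha.2 c)

lemma eq_of_mem_leaves_of_append_eq (hpref : ∀ v ∈ S, ∀ w : List (Fin p), w <+: v → w ∈ S)
    {a b x y : List (Fin p)} (ha : a ∈ leaves p S) (hb : b ∈ leaves p S)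
    (h : a ++ x = b ++ y) : a = b := by
  have hbw : b <+: a ++ x := h ▸ List.prefix_append b y
  rcases List.prefix_or_prefix_of_prefix (List.prefix_append a x) hbw with hab | hba
  · exact eq_of_mem_leaves_of_prefix hpref ha hb.1 hab
  · exact (eq_of_mem_leaves_of_prefix hpref hb ha.1 hba).symm

lemma nil_notMem_leaves (hpref : ∀ v ∈ S, ∀ w : List (Fin p), w <+: v → w ∈ S)
    (hnontriv : ∃ w ∈ S, w ≠ []) : [] ∉ leaves p S := by
  obtain ⟨_, hw, hne⟩ := hnontriv
  obtain ⟨c, t, rfl⟩ := List.exists_cons_of_ne_nil hne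
  exact fun hnil => hnil.2 c (hpref _ hw _ ⟨t, rfl⟩)

lemma exists_isLeafFactorization (hnil : [] ∈ S \ leaves p S)
    (hsplit : ∀ s ∈ S \ leaves p S, ∀ c : Fin p, s ++ [c] ∈ S) (w : List (Fin p)) :
    ∃ L s, IsLeafFactorization S w L s := by
  induction w using List.reverseRecOn with
  | nil => exact ⟨[], [], by simp, hnil, rfl⟩
  | append_singleton w c ih =>
    obtain ⟨L, s, hL, hs, rfl⟩ := ih
    by_cases hleaf : s ++ [c] ∈ leaves p S
    · refine ⟨L ++ [s ++ [c]], [], ?_, hnil, by simp⟩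
      simpa [or_imp, forall_and] using ⟨hL, hleaf⟩
    · exact ⟨L, s ++ [c], hL, ⟨hsplit s hs c, hleaf⟩, by simp⟩

lemma IsLeafFactorization.unique (hpref : ∀ v ∈ S, ∀ w : List (Fin p), w <+: v → w ∈ S)
    {w : List (Fin p)} {L₁ L₂ : List (List (Fin p))} {s₁ s₂ : List (Fin p)}
    (h₁ : IsLeafFactorization S w L₁ s₁) (h₂ : IsLeafFactorization S w L₂ s₂) :
    L₁ = L₂ ∧ s₁ = s₂ := by
  obtain ⟨hL₁, hs₁, rfl⟩ := h₁
  obtain ⟨hL₂, hs₂, hw⟩ := h₂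
  induction L₁ generalizing L₂ with
  | nil =>
    cases L₂ with
    | nil => exact ⟨rfl, by simpa using hw⟩
    | cons ℓ L₂ =>
      have hℓ := hL₂ ℓ List.mem_cons_self
      have : ℓ = s₁ := eq_of_mem_leaves_of_prefix hpref hℓ hs₁.1
        ⟨L₂.flatten ++ s₂, by simpa using hw.symm⟩
      exact absurd (this ▸ hℓ) hs₁.2
  | cons ℓ₁ L₁ ih =>
    cases L₂ with
    | nil =>
      have hℓ := hL₁ ℓ₁ List.mem_cons_self
      have : ℓ₁ = s₂ := eq_of_mem_leaves_of_prefix hpref hℓ hs₂.1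
        ⟨L₁.flatten ++ s₁, by simpa using hw⟩
      exact absurd (this ▸ hℓ) hs₂.2
    | cons ℓ₂ L₂ =>
      simp only [List.flatten_cons, List.append_assoc] at hw
      obtain rfl := eq_of_mem_leaves_of_append_eq hpref (hL₁ ℓ₁ List.mem_cons_self)
        (hL₂ ℓ₂ List.mem_cons_self) hw
      obtain ⟨rfl, rfl⟩ := ih (fun x hx => hL₁ x (List.mem_cons_of_mem _ hx))
        (fun x hx => hL₂ x (List.mem_cons_of_mem _ hx)) (List.append_cancel_left hw)
      exact ⟨rfl, rfl⟩

theorem unique_leaf_factorization_general (p : ℕ)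
    (S : Set (List (Fin p))) (hroot : ([] : List (Fin p)) ∈ S)
    (hpref : ∀ v ∈ S, ∀ w : List (Fin p), w <+: v → w ∈ S)
    (hnontriv : ∃ w ∈ S, w ≠ [])
    (hsplit : ∀ s ∈ S \ leaves p S, ∀ c : Fin p, s ++ [c] ∈ S) :
    ∀ w : List (Fin p),
      ∃! ls : List (List (Fin p)) × List (Fin p),
        (∀ x ∈ ls.1, x ∈ leaves p S) ∧ ls.2 ∈ S \ leaves p S ∧
          w = ls.1.flatten ++ ls.2 := by
  intro w
  have hnil : [] ∈ S \ leaves p S := ⟨hroot, nil_notMem_leaves hpref hnontriv⟩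
  obtain ⟨L, s, h⟩ := exists_isLeafFactorization hnil hsplit w
  refine ⟨(L, s), h, fun ⟨L', s'⟩ h' => ?_⟩
  obtain ⟨rfl, rfl⟩ := IsLeafFactorization.unique hpref h' h
  rfl

/-- If `S` is a nontrivial finite prefix-closed set of words containing the empty word in
which every non-leaf node splits completely, then every word `w` factors uniquely as
`w = ℓ₁ ++ ⋯ ++ ℓₙ ++ s` with each `ℓᵢ` a leaf of `S` and `s ∈ S \ L(S)`. -/
theorem unique_leaf_factorization (p : ℕ) [Fact p.Prime]
    (S : Set (List (Fin p))) (hfin : S.Finite) (hroot : ([] : List (Fin p)) ∈ S)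
    (hpref : ∀ v ∈ S, ∀ w : List (Fin p), w <+: v → w ∈ S)
    (hnontriv : ∃ w ∈ S, w ≠ [])
    (hsplit : ∀ s ∈ S \ leaves p S, ∀ c : Fin p, s ++ [c] ∈ S) :
    ∀ w : List (Fin p),
      ∃! ls : List (List (Fin p)) × List (Fin p),
        (∀ x ∈ ls.1, x ∈ leaves p S) ∧ ls.2 ∈ S \ leaves p S ∧
          w = ls.1.flatten ++ ls.2 :=
  unique_leaf_factorization_general p S hroot hpref hnontriv hsplit
end
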